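/- arXiv:1808.03624 — 5 statements merged into one kernel-verified Lean document; each statement's English description precedes it below -/
import Mathlib

section
/- Let α ∈ (-1, 0) and let u : ℝ^n → ℝ be measurable with ∫_{ℝ^n} |y|^{nα} e^{n u(y)} dy < ∞. Then for every fixed x ∈ ℝ^n, the average (1/|B_R(x)|) ∫_{B_R(x)} u⁺ dy → 0 as R → ∞. -/
open Real MeasureTheory Metric Filter Module Topology

/-!
Since `max a 0 ≤ exp a`, we have `t u⁺ ≤ exp (t u)`, and on `B_R(x)` the weight satisfies
`‖y‖ ^ β ≥ (‖x‖ + R) ^ β` because `β ≤ 0`. Hence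
`∫_{B_R(x)} u⁺ ≤ t⁻¹ (‖x‖ + R) ^ (-β) ∫ ‖y‖ ^ β exp (t u)`, and dividing by `|B_R(x)| = c R ^ d`
leaves the factor `(‖x‖ + R) ^ (-β) / R ^ d`, which tends to `0` because `-β < d`.
-/

lemma max_zero_le_exp (a : ℝ) : max a 0 ≤ exp a :=
  max_le (by linarith [add_one_le_exp a]) (exp_pos a).le

lemma max_zero_le_mul_rpow_mul_exp {t β r ρ : ℝ} (ht : 0 < t) (hβ : β ≤ 0) (hr : 0 < r)
    (hrρ : r ≤ ρ) (a : ℝ) :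
    max a 0 ≤ t⁻¹ * ρ ^ (-β) * (r ^ β * exp (t * a)) := by
  have hρ : 0 < ρ := hr.trans_le hrρ
  calc max a 0 = t⁻¹ * max (t * a) 0 := by
        rw [mul_max_of_nonneg _ _ (inv_nonneg.2 ht.le), inv_mul_cancel_left₀ ht.ne', mul_zero]
    _ ≤ t⁻¹ * exp (t * a) := by gcongr; exact max_zero_le_exp _
    _ = t⁻¹ * ρ ^ (-β) * (ρ ^ β * exp (t * a)) := by
        rw [rpow_neg hρ.le]; field_simp
    _ ≤ t⁻¹ * ρ ^ (-β) * (r ^ β * exp (t * a)) := by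
        have := rpow_le_rpow_of_nonpos hr hrρ hβ
        gcongr

section

variable {E : Type*} [NormedAddCommGroup E] [MeasurableSpace E] [OpensMeasurableSpace E]
  {μ : Measure E} [NullSingletonClass μ]

lemma setIntegral_ball_max_zero_le {u : E → ℝ} {t β : ℝ} (ht : 0 < t) (hβ : β ≤ 0)
    (hint : Integrable (fun y => ‖y‖ ^ β * exp (t * u y)) μ) (x : E) {R : ℝ} (hR : 0 ≤ R) :
    ∫ y in ball x R, max (u y) 0 ∂μ
      ≤ t⁻¹ * (‖x‖ + R) ^ (-β) * ∫ y, ‖y‖ ^ β * exp (t * u y) ∂μ := by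
  have hbound : ∀ᵐ y ∂μ.restrict (ball x R),
      max (u y) 0 ≤ t⁻¹ * (‖x‖ + R) ^ (-β) * (‖y‖ ^ β * exp (t * u y)) := by
    filter_upwards [ae_restrict_mem measurableSet_ball, ae_restrict_of_ae (Measure.ae_ne μ 0)]
      with y hyB hy0
    refine max_zero_le_mul_rpow_mul_exp ht hβ (norm_pos_iff.2 hy0) ?_ _
    have := norm_le_norm_add_norm_sub' y x
    rw [mem_ball, dist_eq_norm] at hyB
    linarith
  calc ∫ y in ball x R, max (u y) 0 ∂μ
      ≤ ∫ y in ball x R, t⁻¹ * (‖x‖ + R) ^ (-β) * (‖y‖ ^ β * exp (t * u y)) ∂μ :=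
        integral_mono_of_nonneg (ae_of_all _ fun _ => le_max_right _ _)
          (hint.restrict.const_mul _) hbound
    _ = t⁻¹ * (‖x‖ + R) ^ (-β) * ∫ y in ball x R, ‖y‖ ^ β * exp (t * u y) ∂μ :=
        integral_const_mul _ _
    _ ≤ t⁻¹ * (‖x‖ + R) ^ (-β) * ∫ y, ‖y‖ ^ β * exp (t * u y) ∂μ := by
        exact mul_le_mul_of_nonneg_left
          (setIntegral_le_integral hint (ae_of_all _ fun y => by positivity)) (by positivity)

end

lemma tendsto_add_rpow_div_pow_atTop (a : ℝ) {γ : ℝ} {d : ℕ} (hγ : γ < d) :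
    Tendsto (fun R : ℝ => (a + R) ^ γ / R ^ d) atTop (𝓝 0) := by
  have hratio : Tendsto (fun R : ℝ => ((a + R) / R) ^ γ) atTop (𝓝 1) := by
    have : Tendsto (fun R : ℝ => a / R + 1) atTop (𝓝 1) := by
      simpa using (tendsto_const_nhds.div_atTop tendsto_id).add_const (1 : ℝ)
    have := this.rpow_const (p := γ) (Or.inl one_ne_zero)
    rw [one_rpow] at this
    refine this.congr' ?_
    filter_upwards [eventually_gt_atTop 0] with R hR
    rw [add_div, div_self hR.ne']
  have hdecay : Tendsto (fun R : ℝ => R ^ (-(d - γ))) atTop (𝓝 0) :=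
    tendsto_rpow_neg_atTop (by linarith)
  have := hratio.mul hdecay
  rw [one_mul] at this
  refine this.congr' ?_
  filter_upwards [eventually_gt_atTop (max 0 (-a))] with R hR
  have hR0 : 0 < R := (le_max_left _ _).trans_lt hR
  have haR : 0 ≤ a + R := by linarith [le_max_right 0 (-a)]
  rw [div_rpow haR hR0.le, rpow_neg hR0.le, rpow_sub hR0, rpow_natCast]
  field_simp

theorem tendsto_average_max_zero_ball {E : Type*} [NormedAddCommGroup E] [NormedSpace ℝ E]
    [FiniteDimensional ℝ E] [Nontrivial E] [MeasurableSpace E] [BorelSpace E] (μ : Measure E)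
    [μ.IsAddHaarMeasure] {u : E → ℝ} {t β : ℝ} (ht : 0 < t) (hβ : β ≤ 0)
    (hβE : -β < finrank ℝ E) (hint : Integrable (fun y => ‖y‖ ^ β * exp (t * u y)) μ) (x : E) :
    Tendsto (fun R : ℝ => (μ (ball x R)).toReal⁻¹ * ∫ y in ball x R, max (u y) 0 ∂μ)
      atTop (𝓝 0) := by
  set I := ∫ y, ‖y‖ ^ β * exp (t * u y) ∂μ
  set c := (μ (ball (0 : E) 1)).toReal
  have hc : 0 < c := ENNReal.toReal_pos (measure_ball_pos μ _ one_pos).ne' measure_ball_lt_top.ne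
  have hlim := (tendsto_add_rpow_div_pow_atTop ‖x‖ hβE).const_mul (t⁻¹ * I / c)
  rw [mul_zero] at hlim
  refine squeeze_zero' (.of_forall fun R => mul_nonneg (by positivity)
    (integral_nonneg fun y => le_max_right _ _)) ?_ hlim
  filter_upwards [eventually_gt_atTop 0] with R hR
  have hvol : (μ (ball x R)).toReal = R ^ finrank ℝ E * c := by
    rw [Measure.addHaar_ball_of_pos μ x hR, ENNReal.toReal_mul,
      ENNReal.toReal_ofReal (by positivity)]
  calc (μ (ball x R)).toReal⁻¹ * ∫ y in ball x R, max (u y) 0 ∂μ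
      ≤ (R ^ finrank ℝ E * c)⁻¹ * (t⁻¹ * (‖x‖ + R) ^ (-β) * I) := by
        rw [hvol]
        gcongr
        exact setIntegral_ball_max_zero_le ht hβ hint x hR.le
    _ = t⁻¹ * I / c * ((‖x‖ + R) ^ (-β) / R ^ finrank ℝ E) := by
        field_simp

theorem stmt_2_general (n : ℕ) (hn : 1 ≤ n) (α : ℝ) (hα : α ∈ Set.Ioo (-1 : ℝ) 0)
    (u : EuclideanSpace ℝ (Fin n) → ℝ)
    (hint : Integrable (fun y => ‖y‖ ^ ((n : ℝ) * α) * Real.exp ((n : ℝ) * u y)))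
    (x : EuclideanSpace ℝ (Fin n)) :
    Tendsto (fun R : ℝ =>
        (volume (ball x R)).toReal⁻¹ * ∫ y in ball x R, max (u y) 0)
      atTop (nhds 0) := by
  have : Nonempty (Fin n) := ⟨⟨0, hn⟩⟩
  have hn₀ : (0 : ℝ) < n := by exact_mod_cast hn
  refine tendsto_average_max_zero_ball volume hn₀ ?_ ?_ hint x
  · nlinarith [hα.2]
  · rw [finrank_euclideanSpace_fin]
    nlinarith [hα.1]

theorem stmt_2 (n : ℕ) (hn : 1 ≤ n) (α : ℝ) (hα : α ∈ Set.Ioo (-1 : ℝ) 0)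
    (u : EuclideanSpace ℝ (Fin n) → ℝ) (hu : Measurable u)
    (hint : Integrable (fun y => ‖y‖ ^ ((n : ℝ) * α) * Real.exp ((n : ℝ) * u y)))
    (x : EuclideanSpace ℝ (Fin n)) :
    Tendsto (fun R : ℝ =>
        (volume (ball x R)).toReal⁻¹ * ∫ y in ball x R, max (u y) 0)
      atTop (nhds 0) :=
  stmt_2_general n hn α hα u hint x
end

section
/- Let f₂ ∈ L¹(ℝ^n) be nonnegative with ‖f₂‖_{L¹} ≤ ε, and define u₂(x) = (1/γ) ∫_{ℝ^n} log((1+|y|)/|x-y|) f₂(y) dy with γ > 0. Then for every q ≥ 1 with qn‖f₂‖_{L¹}/γ < n and every R > 0, ∫_{B_R} e^{n q u₂} dx ≤ C(q, R, ε) < ∞. -/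
/-!
With `ν = (n q / γ) f₂ dy`, a finite measure of mass `s = n q ‖f₂‖₁ / γ < n`, we have
`n q u₂ x = ∫ log K(x, ·) dν` for `K(x, y) = (1 + |y|) / |x - y|`. Jensen's inequality for the
probability measure `ν / s` gives `exp (n q u₂ x) ≤ ⨍ K(x, ·)^s dν`, so by Tonelli it suffices to
bound `∫_{B_R} K(x, y)^s dx` uniformly in `y`. For `x ∈ B_R` we have `K(x, y) ≤ 2` when
`|x - y| ≥ 1 + R` and `K(x, y) ≤ 2 (1 + R) / |x - y|` otherwise, so this integral is at most
`2^s |B_R| + (2 (1 + R))^s ∫_{B_{1+R}} |z|^{-s} dz`, which is finite because `s < n`.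
-/

open Real MeasureTheory Metric Set Module
open scoped ENNReal

/- The summand `1` absorbs the junk cases (`μ = 0` or `φ` not integrable), where the left-hand
side is `exp 0`. -/
theorem ofReal_exp_integral_le_one_add_laverage {α : Type*} [MeasurableSpace α]
    (μ : Measure α) [IsFiniteMeasure μ] (φ : α → ℝ) :
    ENNReal.ofReal (exp (∫ x, φ x ∂μ)) ≤
      1 + ⨍⁻ x, ENNReal.ofReal (exp (μ.real univ * φ x)) ∂μ := by
  rcases eq_or_ne μ 0 with rfl | hμ
  · simp
  by_cases hφ : Integrable φ μ
  swap
  · simp [integral_undef hφ]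
  have : NeZero μ := ⟨hμ⟩
  set m := μ.real univ
  have hexp_nonneg : 0 ≤ᵐ[μ] fun x ↦ exp (m * φ x) := ae_of_all _ fun x ↦ (exp_pos _).le
  by_cases hexp : Integrable (fun x ↦ exp (m * φ x)) μ
  swap
  · rw [← lintegral_ofReal_ne_top_iff_integrable (by fun_prop) hexp_nonneg, not_not] at hexp
    rw [laverage_eq, hexp, ENNReal.top_div_of_ne_top (measure_ne_top _ _)]
    exact le_top
  have hmean : ⨍ x, m * φ x ∂μ = ∫ x, φ x ∂μ := by
    rw [average_eq, integral_const_mul, smul_eq_mul, ← mul_assoc,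
      inv_mul_cancel₀ measureReal_univ_ne_zero, one_mul]
  calc ENNReal.ofReal (exp (∫ x, φ x ∂μ))
      ≤ ENNReal.ofReal (⨍ x, exp (m * φ x) ∂μ) := by
        rw [← hmean]
        exact ENNReal.ofReal_le_ofReal <| convexOn_exp.map_average_le continuousOn_exp
          isClosed_univ (ae_of_all _ fun _ ↦ mem_univ _) (hφ.const_mul m) hexp
    _ = ⨍⁻ x, ENNReal.ofReal (exp (m * φ x)) ∂μ := by
        rw [ofReal_average hexp hexp_nonneg, laverage_eq]
    _ ≤ _ := le_add_self

theorem lintegral_laverage_swap {α β : Type*} [MeasurableSpace α] [MeasurableSpace β]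
    {μ : Measure α} {ν : Measure β} [SFinite μ] [SFinite ν] {f : α → β → ℝ≥0∞}
    (hf : AEMeasurable (Function.uncurry f) (μ.prod ν)) :
    ∫⁻ x, ⨍⁻ y, f x y ∂ν ∂μ = ⨍⁻ y, ∫⁻ x, f x y ∂μ ∂ν := by
  simp only [laverage_eq']
  exact lintegral_lintegral_swap (by rw [Measure.prod_smul_right]; exact hf.smul_measure _)

theorem exp_mul_log_le_rpow {s K b : ℝ} (hs : 0 ≤ s) (hK : 0 < K) (hKb : K ≤ b) :
    exp (s * log K) ≤ b ^ s := by
  rw [mul_comm, ← rpow_def_of_pos hK]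
  exact rpow_le_rpow hK.le hKb hs

theorem exp_mul_log_div_norm_sub_le {E : Type*} [NormedAddCommGroup E] {R s : ℝ} (hs : 0 ≤ s)
    {x : E} (hx : ‖x‖ ≤ R) (y : E) :
    exp (s * log ((1 + ‖y‖) / ‖x - y‖)) ≤
      2 ^ s + (2 * (1 + R)) ^ s * (ball (0 : E) (1 + R)).indicator (‖·‖ ^ (-s)) (x - y) := by
  have h2s : 1 ≤ (2 : ℝ) ^ s := one_le_rpow one_le_two hs
  have hsing : 0 ≤ (2 * (1 + R)) ^ s * (ball (0 : E) (1 + R)).indicator (‖·‖ ^ (-s)) (x - y) :=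
    mul_nonneg (rpow_nonneg (by linarith [(norm_nonneg x).trans hx]) s)
      (indicator_nonneg (fun _ _ ↦ rpow_nonneg (norm_nonneg _) _) _)
  have hy : 1 + ‖y‖ ≤ 1 + R + ‖x - y‖ := by
    linarith [norm_sub_norm_le y x, norm_sub_rev x y]
  rcases (norm_nonneg (x - y)).eq_or_lt with ht | ht
  · -- at `x = y` the kernel is `1 / 0 = 0` and `log 0 = 0`
    rw [← ht, div_zero, log_zero, mul_zero, exp_zero]
    linarith
  have hK : 0 < (1 + ‖y‖) / ‖x - y‖ := by positivity
  by_cases hnear : ‖x - y‖ < 1 + R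
  · have hKb : (1 + ‖y‖) / ‖x - y‖ ≤ 2 * (1 + R) / ‖x - y‖ :=
      div_le_div_of_nonneg_right (by linarith) ht.le
    rw [indicator_of_mem (mem_ball_zero_iff.2 hnear)]
    calc exp (s * log ((1 + ‖y‖) / ‖x - y‖)) ≤ (2 * (1 + R) / ‖x - y‖) ^ s :=
          exp_mul_log_le_rpow hs hK hKb
      _ = (2 * (1 + R)) ^ s * ‖x - y‖ ^ (-s) := by
          rw [div_rpow (by linarith) ht.le, rpow_neg ht.le, div_eq_mul_inv]
      _ ≤ _ := le_add_of_nonneg_left (by linarith)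
  · have hKb : (1 + ‖y‖) / ‖x - y‖ ≤ 2 := by
      rw [div_le_iff₀ ht]; linarith
    exact (exp_mul_log_le_rpow hs hK hKb).trans (le_add_of_nonneg_right hsing)

theorem setLIntegral_ball_exp_mul_log_div_norm_sub_le {E : Type*} [NormedAddCommGroup E]
    [MeasurableSpace E] [BorelSpace E] {μ : Measure E} [μ.IsAddRightInvariant]
    {R s : ℝ} (hs : 0 ≤ s) (y : E) :
    ∫⁻ x in ball (0 : E) R, ENNReal.ofReal (exp (s * log ((1 + ‖y‖) / ‖x - y‖))) ∂μ ≤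
      ENNReal.ofReal (2 ^ s) * μ (ball 0 R) + ENNReal.ofReal ((2 * (1 + R)) ^ s) *
        ∫⁻ z in ball (0 : E) (1 + R), ENNReal.ofReal (‖z‖ ^ (-s)) ∂μ := by
  set φ : E → ℝ≥0∞ := (ball (0 : E) (1 + R)).indicator fun z ↦ ENNReal.ofReal (‖z‖ ^ (-s))
  have hpt : ∀ x ∈ ball (0 : E) R, ENNReal.ofReal (exp (s * log ((1 + ‖y‖) / ‖x - y‖))) ≤
      ENNReal.ofReal (2 ^ s) + ENNReal.ofReal ((2 * (1 + R)) ^ s) * φ (x - y) := by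
    intro x hx
    have hR : 0 ≤ R := (norm_nonneg x).trans (mem_ball_zero_iff.1 hx).le
    refine (ENNReal.ofReal_le_ofReal (exp_mul_log_div_norm_sub_le hs
      (mem_ball_zero_iff.1 hx).le y)).trans ?_
    have hφ :
        ENNReal.ofReal ((ball (0 : E) (1 + R)).indicator (‖·‖ ^ (-s)) (x - y)) = φ (x - y) := by
      by_cases h : x - y ∈ ball (0 : E) (1 + R) <;> simp [φ, h]
    rw [ENNReal.ofReal_add (by positivity) (mul_nonneg (by positivity) (indicator_nonneg
      (fun _ _ ↦ rpow_nonneg (norm_nonneg _) _) _)), ENNReal.ofReal_mul (by positivity), hφ]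
  calc ∫⁻ x in ball (0 : E) R, ENNReal.ofReal (exp (s * log ((1 + ‖y‖) / ‖x - y‖))) ∂μ
      ≤ ∫⁻ x in ball (0 : E) R,
          ENNReal.ofReal (2 ^ s) + ENNReal.ofReal ((2 * (1 + R)) ^ s) * φ (x - y) ∂μ :=
        setLIntegral_mono' measurableSet_ball hpt
    _ ≤ ENNReal.ofReal (2 ^ s) * μ (ball 0 R) +
          ENNReal.ofReal ((2 * (1 + R)) ^ s) * ∫⁻ x, φ (x - y) ∂μ := by
        rw [lintegral_add_left measurable_const, setLIntegral_const,
          lintegral_const_mul' _ _ ENNReal.ofReal_ne_top]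
        gcongr
        exact Measure.restrict_le_self
    _ = _ := by
        rw [lintegral_sub_right_eq_self φ y, lintegral_indicator measurableSet_ball]

theorem lintegral_ball_norm_rpow_neg_lt_top {E : Type*} [NormedAddCommGroup E]
    [NormedSpace ℝ E] [FiniteDimensional ℝ E] [MeasurableSpace E] [BorelSpace E]
    {μ : Measure E} [μ.IsAddHaarMeasure] (hd : 1 ≤ finrank ℝ E) {s : ℝ}
    (hs : s < finrank ℝ E) (r : ℝ) :
    ∫⁻ z in ball (0 : E) r, ENNReal.ofReal (‖z‖ ^ (-s)) ∂μ < ∞ :=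
  Integrable.lintegral_lt_top <| integrableOn_ball_of_norm_le_rpow (C := 1) hd hs
    (ae_of_all _ fun z ↦ by simp [abs_of_nonneg (rpow_nonneg (norm_nonneg z) _)])
    (continuous_norm.measurable.pow_const _).aestronglyMeasurable

theorem setLIntegral_ball_exp_integral_log_kernel_lt_top {E : Type*} [NormedAddCommGroup E]
    [NormedSpace ℝ E] [FiniteDimensional ℝ E] [MeasurableSpace E] [BorelSpace E]
    {μ : Measure E} [μ.IsAddHaarMeasure] (hd : 1 ≤ finrank ℝ E)
    (ν : Measure E) [IsFiniteMeasure ν] (hν : ν.real univ < finrank ℝ E) (R : ℝ) :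
    ∫⁻ x in ball (0 : E) R,
      ENNReal.ofReal (exp (∫ y, log ((1 + ‖y‖) / ‖x - y‖) ∂ν)) ∂μ < ∞ := by
  set s := ν.real univ
  calc ∫⁻ x in ball (0 : E) R, ENNReal.ofReal (exp (∫ y, log ((1 + ‖y‖) / ‖x - y‖) ∂ν)) ∂μ
      ≤ ∫⁻ x in ball (0 : E) R,
          1 + ⨍⁻ y, ENNReal.ofReal (exp (s * log ((1 + ‖y‖) / ‖x - y‖))) ∂ν ∂μ :=
        lintegral_mono fun x ↦ ofReal_exp_integral_le_one_add_laverage ν _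
    _ = μ (ball 0 R) + ⨍⁻ y,
          (∫⁻ x in ball (0 : E) R, ENNReal.ofReal (exp (s * log ((1 + ‖y‖) / ‖x - y‖))) ∂μ) ∂ν := by
        rw [lintegral_add_left measurable_const, setLIntegral_one,
          lintegral_laverage_swap (by fun_prop)]
    _ ≤ μ (ball 0 R) + (ENNReal.ofReal (2 ^ s) * μ (ball 0 R) +
          ENNReal.ofReal ((2 * (1 + R)) ^ s) *
            ∫⁻ z in ball (0 : E) (1 + R), ENNReal.ofReal (‖z‖ ^ (-s)) ∂μ) := by
        gcongr
        exact (laverage_le_essSup _).trans (essSup_le_of_ae_le _ (ae_of_all _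
          (setLIntegral_ball_exp_mul_log_div_norm_sub_le measureReal_nonneg)))
    _ < ∞ := by
        have := lintegral_ball_norm_rpow_neg_lt_top (μ := μ) hd hν (1 + R)
        finiteness

theorem stmt_7_general (n : ℕ) (hn : 1 ≤ n) (γ : ℝ) (hγ : 0 < γ)
    (f₂ : EuclideanSpace ℝ (Fin n) → ℝ) (hf₂ : Integrable f₂) (hf₂0 : ∀ y, 0 ≤ f₂ y)
    (u₂ : EuclideanSpace ℝ (Fin n) → ℝ)
    (hu₂ : ∀ x, u₂ x = (1 / γ) * ∫ y, Real.log ((1 + ‖y‖) / ‖x - y‖) * f₂ y)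
    (q : ℝ) (hq : 1 ≤ q) (hsub : q * n * (∫ y, f₂ y) / γ < n) (R : ℝ) :
    ∫⁻ x in ball (0 : EuclideanSpace ℝ (Fin n)) R,
      ENNReal.ofReal (Real.exp ((n : ℝ) * q * u₂ x)) < ⊤ := by
  set g := fun y ↦ n * q / γ * f₂ y
  have hg0 : ∀ y, 0 ≤ g y := fun y ↦
    mul_nonneg (div_nonneg (mul_nonneg n.cast_nonneg (zero_le_one.trans hq)) hγ.le) (hf₂0 y)
  set ν := volume.withDensity fun y ↦ ENNReal.ofReal (g y)
  have : IsFiniteMeasure ν := isFiniteMeasure_withDensity_ofReal (hf₂.const_mul _).2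
  have hmass : ν.real univ = q * n * (∫ y, f₂ y) / γ := by
    rw [measureReal_def, withDensity_apply _ MeasurableSet.univ, Measure.restrict_univ,
      ← ofReal_integral_eq_lintegral_ofReal (hf₂.const_mul _) (ae_of_all _ hg0),
      ENNReal.toReal_ofReal (integral_nonneg hg0), integral_const_mul]
    ring
  have hu : ∀ x, n * q * u₂ x = ∫ y, log ((1 + ‖y‖) / ‖x - y‖) ∂ν := fun x ↦ by
    rw [integral_withDensity_eq_integral_toReal_smul₀ (by fun_prop) (ae_of_all _ fun _ ↦
      ENNReal.ofReal_lt_top), hu₂, ← integral_const_mul, ← integral_const_mul]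
    refine integral_congr_ae (ae_of_all _ fun y ↦ ?_)
    simp only [g, ENNReal.toReal_ofReal (hg0 y), smul_eq_mul]
    ring
  simp only [hu]
  exact setLIntegral_ball_exp_integral_log_kernel_lt_top (by rwa [finrank_euclideanSpace_fin]) ν
    (by rwa [finrank_euclideanSpace_fin, hmass]) R

theorem stmt_7 (n : ℕ) (hn : 1 ≤ n) (γ ε : ℝ) (hγ : 0 < γ)
    (f₂ : EuclideanSpace ℝ (Fin n) → ℝ) (hf₂ : Integrable f₂) (hf₂0 : ∀ y, 0 ≤ f₂ y)
    (hmass : ∫ y, f₂ y ≤ ε)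
    (u₂ : EuclideanSpace ℝ (Fin n) → ℝ)
    (hu₂ : ∀ x, u₂ x = (1 / γ) * ∫ y, Real.log ((1 + ‖y‖) / ‖x - y‖) * f₂ y)
    (q : ℝ) (hq : 1 ≤ q) (hsub : q * n * (∫ y, f₂ y) / γ < n) (R : ℝ) (hR : 0 < R) :
    ∫⁻ x in ball (0 : EuclideanSpace ℝ (Fin n)) R,
      ENNReal.ofReal (Real.exp ((n : ℝ) * q * u₂ x)) < ⊤ :=
  stmt_7_general n hn γ hγ f₂ hf₂ hf₂0 u₂ hu₂ q hq hsub R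
end

section
/- For every n ≥ 1 there exists C > 0 such that for all x ∈ ℝ^n, ∫_{ℝ^n} |log((1+|y|)/|x-y|)| e^{-|y|²} dy ≤ C log(2 + |x|). -/
open Real MeasureTheory Metric Set

/-!
Split `log ((1 + |y|) / |x - y|)` as `log (1 + |y|) - log |x - y|`. Near the diagonal
`|log |x - y||` is the integrable singularity `|log |z||` on the unit ball, translated to `x`; away
from it `log |x - y| ≤ log ((2 + |x|) (1 + |y|))`. Hence the integrand is dominated by
`(2 log (1 + |y|) + log (2 + |x|)) e^{-|y|²} + 1_{|x - y| < 1} |log |x - y||`, whose integral is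
`a + b log (2 + |x|)` with `a, b` independent of `x` by translation invariance of Lebesgue measure;
since `log (2 + |x|) ≥ log 2 > 0`, the constant `a` is absorbed into `C log (2 + |x|)`.
-/

lemma abs_log_div_le (a b : ℝ) : |log (a / b)| ≤ |log a| + |log b| := by
  rcases eq_or_ne a 0 with rfl | ha
  · simp
  rcases eq_or_ne b 0 with rfl | hb
  · simp
  rw [log_div ha hb]
  exact abs_sub _ _

lemma log_one_add_mul_exp_neg_sq_le {t : ℝ} (ht : 0 ≤ t) :
    log (1 + t) * exp (-t ^ 2) ≤ exp (-(1 / 2) * t ^ 2) := by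
  have hlog : log (1 + t) ≤ t := by linarith [log_le_sub_one_of_pos (x := 1 + t) (by linarith)]
  have hexp : t ≤ exp ((1 / 2) * t ^ 2) := by
    nlinarith [add_one_le_exp ((1 / 2) * t ^ 2), sq_nonneg (t - 1)]
  calc log (1 + t) * exp (-t ^ 2) ≤ exp ((1 / 2) * t ^ 2) * exp (-t ^ 2) := by
        gcongr
        exact hlog.trans hexp
    _ = exp (-(1 / 2) * t ^ 2) := by rw [← exp_add]; ring_nf

lemma exists_pos_le_mul_log_two_add {α : Type*} {f r : α → ℝ} {a b : ℝ} (ha : 0 ≤ a)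
    (hb : 0 ≤ b) (hr : ∀ x, 0 ≤ r x) (hf : ∀ x, f x ≤ a + b * log (2 + r x)) :
    ∃ C > 0, ∀ x, f x ≤ C * log (2 + r x) := by
  have hlog2 : 0 < log 2 := log_pos one_lt_two
  refine ⟨a / log 2 + b + 1, by positivity, fun x ↦ (hf x).trans ?_⟩
  have hL : log 2 ≤ log (2 + r x) := log_le_log two_pos (by linarith [hr x])
  have ha' : a ≤ a / log 2 * log (2 + r x) := by
    rw [div_mul_eq_mul_div, le_div_iff₀ hlog2]
    exact mul_le_mul_of_nonneg_left hL ha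
  nlinarith

section LogSingularity

variable {E : Type*} [NormedAddCommGroup E]

lemma abs_log_norm_sub_le (x y : E) :
    |log ‖x - y‖| ≤
      (ball 0 1).indicator (fun z ↦ |log ‖z‖|) (x - y) + log (2 + ‖x‖) + log (1 + ‖y‖) := by
  have hx : 0 ≤ log (2 + ‖x‖) := log_nonneg (by linarith [norm_nonneg x])
  have hy : 0 ≤ log (1 + ‖y‖) := log_nonneg (by linarith [norm_nonneg y])
  by_cases hxy : x - y ∈ ball 0 1
  · rw [indicator_of_mem hxy]
    linarith
  rw [indicator_of_notMem hxy, zero_add]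
  have h1 : 1 ≤ ‖x - y‖ := by simpa using hxy
  have hle : ‖x - y‖ ≤ (2 + ‖x‖) * (1 + ‖y‖) := by
    nlinarith [norm_sub_le x y, norm_nonneg x, norm_nonneg y]
  calc |log ‖x - y‖| = log ‖x - y‖ := abs_of_nonneg (log_nonneg h1)
    _ ≤ log ((2 + ‖x‖) * (1 + ‖y‖)) := log_le_log (by linarith) hle
    _ = log (2 + ‖x‖) + log (1 + ‖y‖) := log_mul (by positivity) (by positivity)

lemma abs_log_div_norm_sub_mul_exp_le (x y : E) :
    |log ((1 + ‖y‖) / ‖x - y‖)| * exp (-‖y‖ ^ 2) ≤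
      2 * (log (1 + ‖y‖) * exp (-‖y‖ ^ 2)) + log (2 + ‖x‖) * exp (-‖y‖ ^ 2)
        + (ball 0 1).indicator (fun z ↦ |log ‖z‖|) (x - y) := by
  have hy : 0 ≤ log (1 + ‖y‖) := log_nonneg (by linarith [norm_nonneg y])
  have hexp : exp (-‖y‖ ^ 2) ≤ 1 := exp_le_one_iff.2 (by nlinarith [norm_nonneg y])
  have hind : 0 ≤ (ball 0 1).indicator (fun z : E ↦ |log ‖z‖|) (x - y) :=
    indicator_nonneg (fun _ _ ↦ abs_nonneg _) _
  have habs : |log ((1 + ‖y‖) / ‖x - y‖)| ≤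
      2 * log (1 + ‖y‖) + log (2 + ‖x‖) + (ball 0 1).indicator (fun z ↦ |log ‖z‖|) (x - y) := by
    have := abs_log_div_le (1 + ‖y‖) ‖x - y‖
    rw [abs_of_nonneg hy] at this
    linarith [abs_log_norm_sub_le x y]
  nlinarith [mul_le_mul_of_nonneg_right habs (exp_pos (-‖y‖ ^ 2)).le,
    mul_le_of_le_one_right hind hexp]

variable [NormedSpace ℝ E] [FiniteDimensional ℝ E] [MeasurableSpace E] [BorelSpace E]
  (μ : Measure E) [μ.IsAddHaarMeasure]

lemma integrableOn_log_norm_ball : IntegrableOn (fun x : E ↦ log ‖x‖) (ball 0 1) μ := by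
  rcases subsingleton_or_nontrivial E with hE | hE
  · exact integrableOn_zero.congr_fun (fun x _ ↦ by simp [Subsingleton.elim x 0])
      measurableSet_ball
  refine integrableOn_ball_of_norm_le_rpow (C := 2) (α := 1 / 2) Module.finrank_pos ?_ ?_
    (measurable_log.comp measurable_norm).aestronglyMeasurable
  · exact one_half_lt_one.trans_le (by exact_mod_cast Module.finrank_pos)
  · filter_upwards [ae_restrict_mem measurableSet_ball] with x hx
    rcases (norm_nonneg x).eq_or_lt with h0 | h0
    · simp [← h0]
    have := abs_log_mul_self_rpow_lt ‖x‖ (1 / 2) h0 (mem_ball_zero_iff.1 hx).le one_half_pos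
    rw [abs_mul, abs_of_pos (rpow_pos_of_pos h0 _), ← lt_div_iff₀ (rpow_pos_of_pos h0 _)] at this
    rw [norm_eq_abs, rpow_neg h0.le, ← div_eq_mul_inv]
    linarith

end LogSingularity

section Gaussian

variable {V : Type*} [NormedAddCommGroup V] [InnerProductSpace ℝ V] [FiniteDimensional ℝ V]
  [MeasurableSpace V] [BorelSpace V]

lemma integrable_exp_neg_mul_sq_norm {b : ℝ} (hb : 0 < b) :
    Integrable fun v : V ↦ exp (-b * ‖v‖ ^ 2) := by
  have := (GaussianFourier.integrable_cexp_neg_mul_sq_norm_add (V := V) (b := b)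
    (by simpa using hb) 0 0).norm
  simpa [Complex.norm_exp, ← Complex.ofReal_pow] using this

lemma integrable_log_one_add_norm_mul_exp_neg_sq_norm :
    Integrable fun v : V ↦ log (1 + ‖v‖) * exp (-‖v‖ ^ 2) := by
  refine (integrable_exp_neg_mul_sq_norm (V := V) one_half_pos).mono' (by fun_prop) ?_
  refine .of_forall fun v ↦ ?_
  have : 0 ≤ log (1 + ‖v‖) := log_nonneg (by linarith [norm_nonneg v])
  rw [norm_of_nonneg (by positivity)]
  exact log_one_add_mul_exp_neg_sq_le (norm_nonneg v)

lemma integral_abs_log_div_norm_sub_mul_exp_le (x : V) :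
    ∫ y, |log ((1 + ‖y‖) / ‖x - y‖)| * exp (-‖y‖ ^ 2) ≤
      2 * (∫ y : V, log (1 + ‖y‖) * exp (-‖y‖ ^ 2)) + (∫ z in ball (0 : V) 1, |log ‖z‖|)
        + (∫ y : V, exp (-‖y‖ ^ 2)) * log (2 + ‖x‖) := by
  have hA := (integrable_log_one_add_norm_mul_exp_neg_sq_norm (V := V)).const_mul 2
  have hγ : Integrable fun y : V ↦ log (2 + ‖x‖) * exp (-‖y‖ ^ 2) := by
    simpa using (integrable_exp_neg_mul_sq_norm (V := V) one_pos).const_mul (log (2 + ‖x‖))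
  have hK : Integrable fun y ↦ (ball (0 : V) 1).indicator (fun z ↦ |log ‖z‖|) (x - y) := by
    refine Integrable.comp_sub_left ?_ x
    simpa only [norm_eq_abs] using IntegrableOn.integrable_indicator
      (integrableOn_log_norm_ball (volume : Measure V)).norm measurableSet_ball
  calc ∫ y, |log ((1 + ‖y‖) / ‖x - y‖)| * exp (-‖y‖ ^ 2)
      ≤ ∫ y, (2 * (log (1 + ‖y‖) * exp (-‖y‖ ^ 2)) + log (2 + ‖x‖) * exp (-‖y‖ ^ 2)
          + (ball 0 1).indicator (fun z ↦ |log ‖z‖|) (x - y)) :=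
        integral_mono_of_nonneg (.of_forall fun y ↦ by positivity) ((hA.fun_add hγ).fun_add hK)
          (.of_forall (abs_log_div_norm_sub_mul_exp_le x))
    _ = _ := by
        rw [integral_add (hA.fun_add hγ) hK, integral_add hA hγ, integral_const_mul,
          integral_const_mul, integral_sub_left_eq_self, integral_indicator measurableSet_ball]
        ring

end Gaussian

theorem stmt_16_general (n : ℕ) :
    ∃ C > 0, ∀ x : EuclideanSpace ℝ (Fin n),
      ∫ y, |Real.log ((1 + ‖y‖) / ‖x - y‖)| * Real.exp (-‖y‖ ^ 2) ≤
        C * Real.log (2 + ‖x‖) := by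
  refine exists_pos_le_mul_log_two_add ?_ ?_ norm_nonneg
    integral_abs_log_div_norm_sub_mul_exp_le
  · have hA : 0 ≤ ∫ y : EuclideanSpace ℝ (Fin n), log (1 + ‖y‖) * exp (-‖y‖ ^ 2) :=
      integral_nonneg fun y ↦ mul_nonneg (log_nonneg (by simp)) (exp_pos _).le
    positivity
  · positivity

theorem stmt_16 (n : ℕ) (hn : 1 ≤ n) :
    ∃ C > 0, ∀ x : EuclideanSpace ℝ (Fin n),
      ∫ y, |Real.log ((1 + ‖y‖) / ‖x - y‖)| * Real.exp (-‖y‖ ^ 2) ≤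
        C * Real.log (2 + ‖x‖) :=
  stmt_16_general n
end

section
/- Let u : ℝ^n → ℝ be measurable, α > -1, Λ := ∫_{ℝ^n} |x|^{nα} e^{nu} dx < ∞, and suppose u(y) ≥ r^s for all y ∈ B_{r^{2-n}}(x_r) with |x_r| = r, for all r ≥ R, where s > 0 and n ≥ 3. Then ∫_R^∞ r^{nα} e^{n r^s} r^{-(n-2)(n-1)} dr ≤ C Λ < ∞, which is impossible; hence no such family (x_r) exists. -/
open Real MeasureTheory Metric Filter Module

/-!
On the ball `B_{r^{2-n}}(x_r)` the weight `|x|^{nα}` is comparable to a power of `r` and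
`e^{nu} ≥ e^{r^s}`, while the ball has volume of order `r^{(2-n)n}`. So `Λ` dominates
`K r^{-c} e^{r^s}` for all large `r`, which tends to infinity: `e^{r^s}` beats every power of `r`.
-/

lemma rpow_neg_abs_le_rpow {x b : ℝ} (A : ℝ) (hx : 1 ≤ x) (hxb : x ≤ b) :
    b ^ (-|A|) ≤ x ^ A :=
  calc b ^ (-|A|) ≤ x ^ (-|A|) :=
        rpow_le_rpow_of_nonpos (by linarith) hxb (neg_nonpos.mpr (abs_nonneg A))
    _ ≤ x ^ A := rpow_le_rpow_of_exponent_le hx (neg_abs_le A)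

lemma tendsto_rpow_neg_mul_exp_rpow_atTop (c : ℝ) {s : ℝ} (hs : 0 < s) :
    Tendsto (fun r : ℝ => r ^ (-c) * exp (r ^ s)) atTop atTop := by
  have h := (tendsto_exp_div_rpow_atTop (c / s)).comp (tendsto_rpow_atTop hs)
  refine h.congr' ?_
  filter_upwards [eventually_ge_atTop 0] with r hr
  rw [Function.comp_apply, ← rpow_mul hr, mul_div_cancel₀ c hs.ne', rpow_neg hr, div_eq_mul_inv,
    mul_comm]

lemma norm_mem_Icc_of_mem_ball {E : Type*} [SeminormedAddCommGroup E] {x y : E} {r ρ : ℝ}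
    (hx : ‖x‖ = r) (hy : y ∈ ball x ρ) (hρ : ρ ≤ 1) (hr : 2 ≤ r) : 1 ≤ ‖y‖ ∧ ‖y‖ ≤ 2 * r := by
  have hyx : ‖y - x‖ < ρ := mem_ball_iff_norm.mp hy
  have h₁ := norm_sub_norm_le x y
  have h₂ := norm_sub_norm_le y x
  rw [norm_sub_rev] at h₁
  constructor <;> linarith

section Haar

variable {E : Type*} [NormedAddCommGroup E] [NormedSpace ℝ E] [MeasurableSpace E]
  [BorelSpace E] [FiniteDimensional ℝ E] (μ : Measure E) [μ.IsAddHaarMeasure]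

lemma mul_measureReal_ball_le_integral {f : E → ℝ} (hf : Integrable f μ) (hf0 : 0 ≤ f)
    {x : E} {ρ a : ℝ} (hρ : 0 < ρ) (ha : ∀ y ∈ ball x ρ, a ≤ f y) :
    a * (ρ ^ finrank ℝ E * μ.real (ball 0 1)) ≤ ∫ y, f y ∂μ := by
  have hvol : μ.real (ball x ρ) = ρ ^ finrank ℝ E * μ.real (ball 0 1) := by
    rw [measureReal_def, Measure.addHaar_ball_of_pos μ x hρ, ENNReal.toReal_mul,
      ENNReal.toReal_ofReal (by positivity), measureReal_def]
  calc a * (ρ ^ finrank ℝ E * μ.real (ball 0 1)) ≤ ∫ y in ball x ρ, f y ∂μ := by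
        rw [← hvol]
        exact setIntegral_ge_of_const_le_real measurableSet_ball measure_ball_lt_top.ne ha
          hf.integrableOn
    _ ≤ ∫ y, f y ∂μ := setIntegral_le_integral hf (Eventually.of_forall hf0)

lemma rpow_neg_abs_mul_exp_mul_volume_ball_le_integral {u : E → ℝ} {A ν s r ρ : ℝ} (hν : 1 ≤ ν)
    (hint : Integrable (fun y => ‖y‖ ^ A * exp (ν * u y)) μ) {x : E} (hx : ‖x‖ = r) (hr : 2 ≤ r)
    (hρ₀ : 0 < ρ) (hρ₁ : ρ ≤ 1) (hu : ∀ y ∈ ball x ρ, r ^ s ≤ u y) :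
    (2 * r) ^ (-|A|) * exp (r ^ s) * (ρ ^ finrank ℝ E * μ.real (ball 0 1)) ≤
      ∫ y, ‖y‖ ^ A * exp (ν * u y) ∂μ := by
  refine mul_measureReal_ball_le_integral μ hint (fun y => by positivity) hρ₀
    fun y (hy : y ∈ ball x ρ) => ?_
  obtain ⟨hy₁, hy₂⟩ := norm_mem_Icc_of_mem_ball hx hy hρ₁ hr
  have hrs : r ^ s ≤ ν * u y :=
    (hu y hy).trans (le_mul_of_one_le_left ((rpow_nonneg (by linarith) s).trans (hu y hy)) hν)
  exact mul_le_mul (rpow_neg_abs_le_rpow A hy₁ hy₂) (exp_le_exp.mpr hrs) (exp_pos _).le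
    (by positivity)

end Haar

theorem stmt_17_general (n : ℕ) (hn : 3 ≤ n) (α s R : ℝ) (hs : 0 < s)
    (u : EuclideanSpace ℝ (Fin n) → ℝ)
    (hint : Integrable (fun x => ‖x‖ ^ ((n : ℝ) * α) * Real.exp ((n : ℝ) * u x)))
    (xr : ℝ → EuclideanSpace ℝ (Fin n))
    (hxr : ∀ r, R ≤ r → ‖xr r‖ = r)
    (hlow : ∀ r, R ≤ r → ∀ y ∈ ball (xr r) (r ^ ((2 : ℝ) - n)), r ^ s ≤ u y) :
    False := by
  set A : ℝ := n * α
  set c : ℝ := |A| + (n - 2) * n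
  set K : ℝ := 2 ^ (-|A|) * volume.real (ball (0 : EuclideanSpace ℝ (Fin n)) 1)
  have hK : 0 < K := mul_pos (by positivity)
    (ENNReal.toReal_pos (measure_ball_pos _ _ one_pos).ne' measure_ball_lt_top.ne)
  have hn3 : (3 : ℝ) ≤ n := by exact_mod_cast hn
  have bound : ∀ r, max R 2 ≤ r →
      K * (r ^ (-c) * exp (r ^ s)) ≤ ∫ x, ‖x‖ ^ A * exp (n * u x) := by
    intro r hr
    obtain ⟨hR, hr₂⟩ := max_le_iff.mp hr
    have hr₀ : 0 < r := by linarith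
    have hball := rpow_neg_abs_mul_exp_mul_volume_ball_le_integral volume (by linarith) hint
      (hxr r hR) hr₂ (rpow_pos_of_pos hr₀ _)
      (rpow_le_one_of_one_le_of_nonpos (by linarith) (by linarith)) (hlow r hR)
    rw [finrank_euclideanSpace, Fintype.card_fin, ← rpow_natCast, ← rpow_mul hr₀.le,
      mul_rpow zero_le_two hr₀.le] at hball
    convert hball using 1
    rw [show -c = -|A| + (2 - n) * n by ring, rpow_add hr₀]
    ring
  obtain ⟨r, hlt, hr⟩ := (((tendsto_rpow_neg_mul_exp_rpow_atTop c hs).const_mul_atTop hK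
    |>.eventually_gt_atTop _).and (eventually_ge_atTop (max R 2))).exists
  exact (bound r hr).not_gt hlt

theorem stmt_17 (n : ℕ) (hn : 3 ≤ n) (α s R : ℝ) (hα : -1 < α) (hs : 0 < s)
    (hR : 1 ≤ R)
    (u : EuclideanSpace ℝ (Fin n) → ℝ) (hu : Measurable u)
    (hint : Integrable (fun x => ‖x‖ ^ ((n : ℝ) * α) * Real.exp ((n : ℝ) * u x)))
    (xr : ℝ → EuclideanSpace ℝ (Fin n))
    (hxr : ∀ r, R ≤ r → ‖xr r‖ = r)
    (hlow : ∀ r, R ≤ r → ∀ y ∈ ball (xr r) (r ^ ((2 : ℝ) - n)), r ^ s ≤ u y) :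
    False :=
  stmt_17_general n hn α s R hs u hint xr hxr hlow
end

section
/- Let f ∈ L¹(ℝ^n) be nonnegative with total mass m := ‖f‖_{L¹}, let γ > 0, q ≥ 1, ε₂ > 0 be such that q m / γ ≤ ε₂ < n. Then for every ball B_ρ(x) with 0 < ρ ≤ 1, ∫_{B_ρ(x)} exp( (q/γ) ∫_{ℝ^n} log(1/|z-y|) 1_{|z-y|≤1} f(y) dy ) dz ≤ C(n, ε₂) ρ^{n - ε₂}. -/
/-!
Put `m = ∫ f` and `K t = log (1 / t) · 1_{t ≤ 1}` (`logKernel`). Jensen's inequality for `exp`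
and the probability measure `f dy / m` gives
`exp ((q / γ) ∫ K (|z - y|) f y dy) ≤ m⁻¹ ∫ exp (c K (|z - y|)) f y dy` with `c = q m / γ ≤ ε₂`,
and `exp (c K t) ≤ max 1 (t ^ (-ε₂))`. By Tonelli it then suffices to bound
`∫_{B_ρ(x)} max 1 (|z - y| ^ (-ε₂)) dz` uniformly in `y`. Splitting at `|z - y| = ρ`, this is at
most `ρ ^ (-ε₂) |B_ρ| + ∫_{B_ρ(0)} |w| ^ (-ε₂) dw`, and by scaling both terms are multiples of
`ρ ^ (n - ε₂)`, the second one finite because `ε₂ < n`.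
-/

open Real MeasureTheory Metric

open scoped ENNReal

namespace MeasureTheory

variable {α : Type*} [MeasurableSpace α] {μ : Measure α}

theorem ofReal_integral_le_lintegral_ofReal (h : α → ℝ) :
    ENNReal.ofReal (∫ x, h x ∂μ) ≤ ∫⁻ x, ENNReal.ofReal (h x) ∂μ := by
  by_cases hh : Integrable h μ
  · calc ENNReal.ofReal (∫ x, h x ∂μ)
        ≤ ENNReal.ofReal (∫ x, max (h x) 0 ∂μ) :=
          ENNReal.ofReal_le_ofReal (integral_mono hh hh.pos_part fun _ ↦ le_max_left _ _)
      _ = ∫⁻ x, ENNReal.ofReal (max (h x) 0) ∂μ :=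
          ofReal_integral_eq_lintegral_ofReal hh.pos_part (.of_forall fun _ ↦ le_max_right _ _)
      _ = ∫⁻ x, ENNReal.ofReal (h x) ∂μ := by
          simp_rw [ENNReal.ofReal_max, ENNReal.ofReal_zero, max_zero]
  · simp [integral_undef hh]

/-- Jensen's inequality for `exp` and the probability measure `f μ / ∫ f dμ`. -/
theorem ofReal_mul_exp_integral_div_le {f φ : α → ℝ} (hf : Integrable f μ)
    (hf0 : ∀ y, 0 ≤ f y) (hφ0 : ∀ y, 0 ≤ φ y) (hm : 0 < ∫ y, f y ∂μ) :
    ENNReal.ofReal ((∫ y, f y ∂μ) * exp ((∫ y, φ y * f y ∂μ) / ∫ y, f y ∂μ)) ≤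
      ∫⁻ y, ENNReal.ofReal (exp (φ y) * f y) ∂μ := by
  set m := ∫ y, f y ∂μ
  by_cases hφf : Integrable (fun y ↦ φ y * f y) μ
  · set t := (∫ y, φ y * f y ∂μ) / m
    have tangent : ∀ y, exp t * ((1 - t) * f y + φ y * f y) ≤ exp (φ y) * f y := by
      intro y
      have := mul_le_mul_of_nonneg_left (add_one_le_exp (φ y - t)) (exp_pos t).le
      rw [← exp_add, add_sub_cancel] at this
      nlinarith [hf0 y]
    calc ENNReal.ofReal (m * exp t)
        = ENNReal.ofReal (∫ y, exp t * ((1 - t) * f y + φ y * f y) ∂μ) := by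
          rw [integral_const_mul, integral_add (hf.const_mul _) hφf, integral_const_mul]
          have ht : t * m = ∫ y, φ y * f y ∂μ := div_mul_cancel₀ _ hm.ne'
          congr 1
          linear_combination (exp t) * ht
      _ ≤ ∫⁻ y, ENNReal.ofReal (exp t * ((1 - t) * f y + φ y * f y)) ∂μ :=
          ofReal_integral_le_lintegral_ofReal _
      _ ≤ ∫⁻ y, ENNReal.ofReal (exp (φ y) * f y) ∂μ :=
          lintegral_mono fun y ↦ ENNReal.ofReal_le_ofReal (tangent y)
  · rw [integral_undef hφf, zero_div, exp_zero, mul_one,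
      ofReal_integral_eq_lintegral_ofReal hf (.of_forall hf0)]
    exact lintegral_mono fun y ↦ ENNReal.ofReal_le_ofReal
      (le_mul_of_one_le_left (hf0 y) (one_le_exp (hφ0 y)))

variable {β : Type*} [MeasurableSpace β]

theorem lintegral_exp_mul_integral_le [SFinite μ] {ν : Measure β} [SFinite ν] [Nonempty β]
    {f : β → ℝ} {K : α → β → ℝ} {c : ℝ} {B : ℝ≥0∞} (hf : Integrable f ν)
    (hf0 : ∀ y, 0 ≤ f y) (hK : Measurable (Function.uncurry K)) (hK0 : ∀ z y, 0 ≤ K z y)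
    (hc : 0 ≤ c) (hB : ∀ y, ∫⁻ z, ENNReal.ofReal (exp (c * (∫ y, f y ∂ν) * K z y)) ∂μ ≤ B) :
    ∫⁻ z, ENNReal.ofReal (exp (c * ∫ y, K z y * f y ∂ν)) ∂μ ≤ B := by
  obtain hm | hm := (integral_nonneg (f := f) hf0).eq_or_lt
  · have hf_ae : f =ᵐ[ν] 0 := (integral_eq_zero_iff_of_nonneg hf0 hf).1 hm.symm
    have hKf : ∀ z, ∫ y, K z y * f y ∂ν = 0 := fun z ↦
      integral_eq_zero_of_ae (by filter_upwards [hf_ae] with y hy; simp [hy])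
    obtain ⟨y⟩ := ‹Nonempty β›
    simpa [hKf, ← hm] using hB y
  set m := ∫ y, f y ∂ν
  have hm0 : ENNReal.ofReal m ≠ 0 := (ENNReal.ofReal_pos.2 hm).ne'
  have jensen : ∀ z, ENNReal.ofReal (exp (c * ∫ y, K z y * f y ∂ν)) ≤
      (∫⁻ y, ENNReal.ofReal (exp (c * m * K z y) * f y) ∂ν) / ENNReal.ofReal m := by
    intro z
    have h := ofReal_mul_exp_integral_div_le hf hf0 (φ := fun y ↦ c * m * K z y)
      (fun y ↦ mul_nonneg (mul_nonneg hc hm.le) (hK0 z y)) hm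
    have hexp : (∫ y, c * m * K z y * f y ∂ν) / m = c * ∫ y, K z y * f y ∂ν := by
      simp_rw [mul_assoc, integral_const_mul]
      field_simp
    rw [hexp, ENNReal.ofReal_mul hm.le, mul_comm] at h
    exact (ENNReal.le_div_iff_mul_le (.inl hm0) (.inl ENNReal.ofReal_ne_top)).2 h
  have hmeas : AEMeasurable (Function.uncurry fun z y ↦
      ENNReal.ofReal (exp (c * m * K z y) * f y)) (μ.prod ν) :=
    ((hK.const_mul _).exp.aemeasurable.mul hf.aemeasurable.comp_snd).ennreal_ofReal
  calc ∫⁻ z, ENNReal.ofReal (exp (c * ∫ y, K z y * f y ∂ν)) ∂μ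
      ≤ ∫⁻ z, (∫⁻ y, ENNReal.ofReal (exp (c * m * K z y) * f y) ∂ν) / ENNReal.ofReal m ∂μ :=
        lintegral_mono jensen
    _ = (∫⁻ y, ∫⁻ z, ENNReal.ofReal (exp (c * m * K z y) * f y) ∂μ ∂ν) / ENNReal.ofReal m := by
        simp_rw [div_eq_mul_inv]
        rw [lintegral_mul_const' _ _ (ENNReal.inv_ne_top.2 hm0), lintegral_lintegral_swap hmeas]
    _ = (∫⁻ y, (∫⁻ z, ENNReal.ofReal (exp (c * m * K z y)) ∂μ) * ENNReal.ofReal (f y) ∂ν) /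
          ENNReal.ofReal m := by
        simp_rw [ENNReal.ofReal_mul (exp_pos _).le, lintegral_mul_const' _ _ ENNReal.ofReal_ne_top]
    _ ≤ (∫⁻ y, B * ENNReal.ofReal (f y) ∂ν) / ENNReal.ofReal m := by
        gcongr with y
        exact hB y
    _ = B := by
        rw [lintegral_const_mul'' _ hf.aemeasurable.ennreal_ofReal,
          ← ofReal_integral_eq_lintegral_ofReal hf (.of_forall hf0),
          ENNReal.mul_div_cancel_right hm0 ENNReal.ofReal_ne_top]

theorem setLIntegral_ball_comp_sub {G : Type*} [NormedAddCommGroup G] [MeasurableSpace G]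
    [BorelSpace G] {μ : Measure G} [μ.IsAddRightInvariant] (g : G → ℝ≥0∞) (y : G) (r : ℝ) :
    ∫⁻ z in ball y r, g (z - y) ∂μ = ∫⁻ w in ball 0 r, g w ∂μ := by
  have hpre : (· - y) ⁻¹' ball (0 : G) r = ball y r := by ext; simp [dist_eq_norm]
  rw [← hpre]
  exact (measurePreserving_sub_right μ y).setLIntegral_comp_preimage_emb
    (MeasurableEquiv.subRight y).measurableEmbedding g _

section HaarBall

open Module

variable {E : Type*} [NormedAddCommGroup E] [NormedSpace ℝ E] [FiniteDimensional ℝ E]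
  [MeasurableSpace E] [BorelSpace E] {μ : Measure E} [μ.IsAddHaarMeasure]

theorem setIntegral_ball_norm_rpow (s : ℝ) {ρ : ℝ} (hρ : 0 < ρ) :
    ∫ w in ball (0 : E) ρ, ‖w‖ ^ s ∂μ =
      ρ ^ ((finrank ℝ E : ℝ) + s) * ∫ w in ball (0 : E) 1, ‖w‖ ^ s ∂μ := by
  have h := Measure.setIntegral_comp_smul_of_pos μ (fun w : E ↦ ‖w‖ ^ s) (ball 0 1) hρ
  simp_rw [smul_unitBall_of_pos hρ, norm_smul, Real.norm_of_nonneg hρ.le,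
    mul_rpow hρ.le (norm_nonneg _), integral_const_mul, smul_eq_mul] at h
  rw [rpow_add hρ, rpow_natCast, mul_assoc, h]
  field_simp

theorem lintegral_ball_norm_sub_rpow_neg {ε ρ : ℝ} (hd : 1 ≤ finrank ℝ E)
    (hε : ε < finrank ℝ E) (hρ : 0 < ρ) (y : E) :
    ∫⁻ z in ball y ρ, ENNReal.ofReal (‖z - y‖ ^ (-ε)) ∂μ =
      ENNReal.ofReal (ρ ^ ((finrank ℝ E : ℝ) - ε) * ∫ w in ball (0 : E) 1, ‖w‖ ^ (-ε) ∂μ) := by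
  have hint : IntegrableOn (fun w : E ↦ ‖w‖ ^ (-ε)) (ball 0 ρ) μ :=
    integrableOn_ball_of_norm_le_rpow (C := 1) hd hε
      (.of_forall fun w ↦ by simp [abs_of_nonneg (rpow_nonneg (norm_nonneg w) _)])
      (measurable_norm.pow_const _).aestronglyMeasurable
  rw [setLIntegral_ball_comp_sub (fun w ↦ ENNReal.ofReal (‖w‖ ^ (-ε))), sub_eq_add_neg,
    ← setIntegral_ball_norm_rpow _ hρ]
  exact (ofReal_integral_eq_lintegral_ofReal hint
    (.of_forall fun w ↦ rpow_nonneg (norm_nonneg w) _)).symm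

theorem lintegral_ball_max_one_norm_sub_rpow_neg_le {ε ρ : ℝ} (hε0 : 0 ≤ ε)
    (hε : ε < finrank ℝ E) (hρ : 0 < ρ) (hρ1 : ρ ≤ 1) (x y : E) :
    ∫⁻ z in ball x ρ, ENNReal.ofReal (max 1 (‖z - y‖ ^ (-ε))) ∂μ ≤
      ENNReal.ofReal ((μ.real (ball 0 1) + ∫ w in ball (0 : E) 1, ‖w‖ ^ (-ε) ∂μ) *
        ρ ^ ((finrank ℝ E : ℝ) - ε)) := by
  have hd : 1 ≤ finrank ℝ E := by exact_mod_cast hε0.trans_lt hε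
  have hρε : 1 ≤ ρ ^ (-ε) := one_le_rpow_of_pos_of_le_one_of_nonpos hρ hρ1 (neg_nonpos.2 hε0)
  set F : E → ℝ≥0∞ := (ball y ρ).indicator fun z ↦ ENNReal.ofReal (‖z - y‖ ^ (-ε))
  have hsplit : ∀ z, ENNReal.ofReal (max 1 (‖z - y‖ ^ (-ε))) ≤
      ENNReal.ofReal (ρ ^ (-ε)) + F z := by
    intro z
    by_cases hz : z ∈ ball y ρ
    · rw [show F z = _ from Set.indicator_of_mem hz _,
        ← ENNReal.ofReal_add (by positivity) (by positivity)]
      exact ENNReal.ofReal_le_ofReal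
        (max_le (by linarith [rpow_nonneg (norm_nonneg (z - y)) (-ε)]) (by linarith))
    · have hzy : ρ ≤ ‖z - y‖ := by simpa [dist_eq_norm] using hz
      rw [show F z = 0 from Set.indicator_of_notMem hz _, add_zero]
      exact ENNReal.ofReal_le_ofReal
        (max_le hρε (rpow_le_rpow_of_nonpos hρ hzy (neg_nonpos.2 hε0)))
  have hvol : μ (ball x ρ) = ENNReal.ofReal (ρ ^ (finrank ℝ E : ℝ) * μ.real (ball 0 1)) := by
    rw [Measure.addHaar_ball_of_pos μ x hρ, ENNReal.ofReal_mul (by positivity), rpow_natCast,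
      ofReal_measureReal measure_ball_lt_top.ne]
  calc ∫⁻ z in ball x ρ, ENNReal.ofReal (max 1 (‖z - y‖ ^ (-ε))) ∂μ
      ≤ ∫⁻ z in ball x ρ, (ENNReal.ofReal (ρ ^ (-ε)) + F z) ∂μ := lintegral_mono hsplit
    _ ≤ ENNReal.ofReal (ρ ^ (-ε)) * μ (ball x ρ) + ∫⁻ z, F z ∂μ := by
        rw [lintegral_add_left measurable_const, setLIntegral_const]
        gcongr
        exact Measure.restrict_le_self
    _ = ENNReal.ofReal (ρ ^ ((finrank ℝ E : ℝ) - ε) * μ.real (ball 0 1)) +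
          ENNReal.ofReal (ρ ^ ((finrank ℝ E : ℝ) - ε) *
            ∫ w in ball (0 : E) 1, ‖w‖ ^ (-ε) ∂μ) := by
        rw [lintegral_indicator measurableSet_ball, lintegral_ball_norm_sub_rpow_neg hd hε hρ,
          hvol, ← ENNReal.ofReal_mul (by positivity), ← mul_assoc, ← rpow_add hρ,
          neg_add_eq_sub]
    _ = _ := by
        rw [← ENNReal.ofReal_add (by positivity) (mul_nonneg (by positivity)
            (setIntegral_nonneg measurableSet_ball fun w _ ↦ by positivity)),
          ← mul_add, mul_comm]

end HaarBall

end MeasureTheory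

noncomputable def logKernel (t : ℝ) : ℝ := if t ≤ 1 then log (1 / t) else 0

theorem log_one_div_mul_ite (t a : ℝ) :
    log (1 / t) * (if t ≤ 1 then a else 0) = logKernel t * a := by
  unfold logKernel
  split_ifs <;> simp

theorem logKernel_nonneg {t : ℝ} (ht : 0 ≤ t) : 0 ≤ logKernel t := by
  unfold logKernel
  split_ifs with h
  · rw [one_div, log_inv, neg_nonneg]
    exact log_nonpos ht h
  · rfl

theorem measurable_logKernel : Measurable logKernel :=
  Measurable.ite measurableSet_Iic (measurable_log.comp (measurable_const.div measurable_id))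
    measurable_const

theorem exp_mul_logKernel_le {c ε t : ℝ} (hcε : c ≤ ε) (ht : 0 ≤ t) :
    exp (c * logKernel t) ≤ max 1 (t ^ (-ε)) := by
  unfold logKernel
  split_ifs with h1
  · rcases ht.eq_or_lt with rfl | ht
    · simp
    · rw [one_div, log_inv, rpow_def_of_pos ht, show c * -log t = log t * -c by ring]
      exact le_max_of_le_right
        (exp_le_exp.2 (mul_le_mul_of_nonpos_left (by linarith) (log_nonpos ht.le h1)))
  · simp

theorem stmt_19_general (n : ℕ) (ε₂ : ℝ) (hε₂ : 0 < ε₂) (hε₂n : ε₂ < n) :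
    ∃ C > 0, ∀ (f : EuclideanSpace ℝ (Fin n) → ℝ) (γ q : ℝ),
      Integrable f → (∀ y, 0 ≤ f y) → 0 < γ → 1 ≤ q →
      q * (∫ y, f y) / γ ≤ ε₂ →
      ∀ (ρ : ℝ), ρ ∈ Set.Ioc (0 : ℝ) 1 → ∀ x : EuclideanSpace ℝ (Fin n),
        ∫⁻ z in ball x ρ,
          ENNReal.ofReal (Real.exp ((q / γ) *
            ∫ y, Real.log (1 / ‖z - y‖) * (if ‖z - y‖ ≤ 1 then f y else 0))) ≤
          ENNReal.ofReal (C * ρ ^ ((n : ℝ) - ε₂)) := by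
  have hε₂n' : ε₂ < Module.finrank ℝ (EuclideanSpace ℝ (Fin n)) := by
    rwa [finrank_euclideanSpace_fin]
  refine ⟨volume.real (ball (0 : EuclideanSpace ℝ (Fin n)) 1) +
      ∫ w in ball (0 : EuclideanSpace ℝ (Fin n)) 1, ‖w‖ ^ (-ε₂),
    add_pos_of_pos_of_nonneg
      (ENNReal.toReal_pos (measure_ball_pos _ _ one_pos).ne' measure_ball_lt_top.ne)
      (setIntegral_nonneg measurableSet_ball fun w _ ↦ by positivity), ?_⟩
  intro f γ q hf hf0 hγ hq hqm ρ ⟨hρ, hρ1⟩ x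
  simp_rw [log_one_div_mul_ite]
  refine lintegral_exp_mul_integral_le hf hf0
    (measurable_logKernel.comp (measurable_fst.sub measurable_snd).norm)
    (fun z y ↦ logKernel_nonneg (norm_nonneg _)) (by positivity) fun y ↦ ?_
  calc ∫⁻ z in ball x ρ, ENNReal.ofReal (exp (q / γ * (∫ y, f y) * logKernel ‖z - y‖))
      ≤ ∫⁻ z in ball x ρ, ENNReal.ofReal (max 1 (‖z - y‖ ^ (-ε₂))) :=
        lintegral_mono fun z ↦ ENNReal.ofReal_le_ofReal
          (exp_mul_logKernel_le (by rwa [div_mul_eq_mul_div]) (norm_nonneg _))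
    _ ≤ _ := by
        simpa only [finrank_euclideanSpace_fin] using
          lintegral_ball_max_one_norm_sub_rpow_neg_le hε₂.le hε₂n' hρ hρ1 x y

theorem stmt_19 (n : ℕ) (hn : 1 ≤ n) (ε₂ : ℝ) (hε₂ : 0 < ε₂) (hε₂n : ε₂ < n) :
    ∃ C > 0, ∀ (f : EuclideanSpace ℝ (Fin n) → ℝ) (γ q : ℝ),
      Integrable f → (∀ y, 0 ≤ f y) → 0 < γ → 1 ≤ q →
      q * (∫ y, f y) / γ ≤ ε₂ →
      ∀ (ρ : ℝ), ρ ∈ Set.Ioc (0 : ℝ) 1 → ∀ x : EuclideanSpace ℝ (Fin n),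
        ∫⁻ z in ball x ρ,
          ENNReal.ofReal (Real.exp ((q / γ) *
            ∫ y, Real.log (1 / ‖z - y‖) * (if ‖z - y‖ ≤ 1 then f y else 0))) ≤
          ENNReal.ofReal (C * ρ ^ ((n : ℝ) - ε₂)) :=
  stmt_19_general n ε₂ hε₂ hε₂n
end
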